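/- Let 2 ≤ p < p0 ≤ ∞ and n ≤ m. Then the Weyl numbers of id : ℓ_{p0}^m → ℓ_p^m satisfy x_n(id) ≲ (m/n)^{1/r} where 1/r = (1/p − 1/p0)/(1 − 2/p0), with the implicit constant independent of n and m. -/

import Mathlib

/-!
Take `c = 1`. If `A : ℓ₂ → ℂ^m` satisfies `‖A u‖_{p₀} ≤ ‖u‖`, each coordinate functional of `A`
has norm at most `1`, so `A`, viewed as a map into `ℓ₂^m`, has Hilbert–Schmidt norm at most `√m`:
the trace of `A A*` is at most `m`. Hence fewer than `n` eigenvalues of `A A*` exceed `m/n`, and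
composing `A` with the projection onto the span of `A*` of the corresponding eigenvectors gives
an `F` of rank `< n` with `‖(A - F) u‖₂² ≤ (m/n) ‖u‖²`. Since `A - F = A ∘ P` with `P` a
contraction, also `‖(A - F) u‖_{p₀} ≤ 1` on the unit ball, and Hölder's inequality (log-convexity
of `t ↦ ∑ |yᵢ|^t`) interpolates between the `ℓ₂` and `ℓ_{p₀}` bounds to give
`‖(A - F) u‖_p ≤ (m/n)^{1/r}`.
-/

open scoped ENNReal

instance : Fact ((1 : ℝ≥0∞) ≤ 2) := ⟨one_le_two⟩

/-- The sequence space `ℓ₂` of square-summable complex sequences. -/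
noncomputable abbrev ellTwo : Type := lp (fun _ : ℕ => ℂ) 2

/-- The `ℓ_p` (quasi-)norm on `ℂ^m`, `0 < p < ∞`. -/
noncomputable def lpNorm (p : ℝ) {m : ℕ} (x : Fin m → ℂ) : ℝ≥0∞ :=
  (∑ i, (‖x i‖₊ : ℝ≥0∞) ^ p) ^ (1 / p)

/-- The `ℓ_p` norm on `ℂ^m` for `p ∈ (0,∞]`, with the `sup`-norm for `p = ∞`. -/
noncomputable def lpNormE (p : ℝ≥0∞) {m : ℕ} (x : Fin m → ℂ) : ℝ≥0∞ :=
  if p = ∞ then ⨆ i, (‖x i‖₊ : ℝ≥0∞) else (∑ i, (‖x i‖₊ : ℝ≥0∞) ^ p.toReal) ^ (1 / p.toReal)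

/-- The `n`-th Weyl number of the identity between two quasi-normed structures. -/
noncomputable def genWeylNum (W : Type*) [AddCommGroup W] [Module ℂ W]
    (N₁ N₂ : W → ℝ≥0∞) (n : ℕ) : ℝ≥0∞ :=
  ⨆ A : {A : ellTwo →ₗ[ℂ] W // ∀ u, N₁ (A u) ≤ ENNReal.ofReal ‖u‖},
    ⨅ F : {F : ellTwo →ₗ[ℂ] W // Module.rank ℂ (LinearMap.range F) < (n : Cardinal)},
      ⨆ u : {u : ellTwo // ‖u‖ ≤ 1}, N₂ (A.1 u.1 - F.1 u.1)

open Finset RCLike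
open scoped InnerProductSpace InnerProduct

theorem card_filter_lt_lt_of_sum_le {ι : Type*} [Fintype ι] {f : ι → ℝ} (hf : ∀ i, 0 ≤ f i)
    {n : ℕ} {R : ℝ} (hn : 0 < n) (hR : 0 ≤ R) (hsum : ∑ i, f i ≤ n * R) :
    #{i | R < f i} < n := by
  by_contra! hK
  have hne : ({i | R < f i} : Finset ι).Nonempty := card_pos.mp (hn.trans_le hK)
  have : (n : ℝ) * R < n * R := calc
    (n : ℝ) * R ≤ #{i | R < f i} * R := by gcongr
    _ = ∑ i ∈ {i | R < f i}, R := by simp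
    _ < ∑ i ∈ {i | R < f i}, f i := sum_lt_sum_of_nonempty hne fun i hi => (mem_filter.1 hi).2
    _ ≤ ∑ i, f i := sum_le_univ_sum_of_nonneg hf
    _ ≤ n * R := hsum
  exact lt_irrefl _ this

theorem sum_rpow_le_sum_rpow_pow_mul_sum_rpow_pow {ι : Type*} (s : Finset ι) {f : ι → ℝ}
    (hf : ∀ i, 0 ≤ f i) {a p t : ℝ} (ha : 0 ≤ a) (hap : a ≤ p) (hpt : p < t) :
    ∑ i ∈ s, f i ^ p ≤
      (∑ i ∈ s, f i ^ a) ^ ((t - p) / (t - a)) * (∑ i ∈ s, f i ^ t) ^ ((p - a) / (t - a)) := by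
  rcases hap.eq_or_lt with rfl | hap
  · rw [div_self (by linarith), sub_self, zero_div, Real.rpow_one, Real.rpow_zero, mul_one]
  set q := (t - a) / (p - a)
  have hq : 1 ≤ q := by rw [one_le_div (by linarith)]; linarith
  have hwg : ∀ i, f i ^ a * f i ^ (p - a) = f i ^ p := fun i => by
    rw [← Real.rpow_add' (hf i) (by linarith), add_sub_cancel]
  have hwgq : ∀ i, f i ^ a * (f i ^ (p - a)) ^ q = f i ^ t := fun i => by
    rw [← Real.rpow_mul (hf i), mul_div_cancel₀ _ (by linarith),
      ← Real.rpow_add' (hf i) (by linarith), add_sub_cancel]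
  have hHolder := Real.inner_le_weight_mul_Lp_of_nonneg s hq (fun i => f i ^ a)
    (fun i => f i ^ (p - a)) (fun i => Real.rpow_nonneg (hf i) _)
    (fun i => Real.rpow_nonneg (hf i) _)
  simp only [hwg, hwgq] at hHolder
  have hexp : 1 - q⁻¹ = (t - p) / (t - a) := by
    rw [inv_div]; field_simp [show t - a ≠ 0 by linarith]; ring
  rwa [hexp, inv_div] at hHolder

section Spectral

variable {𝕜 E F : Type*} [RCLike 𝕜]
  [NormedAddCommGroup E] [InnerProductSpace 𝕜 E] [NormedAddCommGroup F] [InnerProductSpace 𝕜 F]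

theorem LinearMap.IsSymmetric.re_inner_apply_self_le [FiniteDimensional 𝕜 F] {B : F →ₗ[𝕜] F}
    (hB : B.IsSymmetric) {d : ℕ} (hd : Module.finrank 𝕜 F = d) {R : ℝ} (y : F)
    (hy : ∀ k, R < hB.eigenvalues hd k → ⟪hB.eigenvectorBasis hd k, y⟫_𝕜 = 0) :
    re ⟪y, B y⟫_𝕜 ≤ R * ‖y‖ ^ 2 := by
  set b := hB.eigenvectorBasis hd
  set μ := hB.eigenvalues hd
  have hterm : ∀ k, ⟪y, b k⟫_𝕜 * ⟪b k, B y⟫_𝕜 = μ k * (⟪y, b k⟫_𝕜 * ⟪b k, y⟫_𝕜) := fun k => by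
    rw [← hB, hB.apply_eigenvectorBasis, inner_smul_left, conj_ofReal]; ring
  calc re ⟪y, B y⟫_𝕜 = ∑ k, μ k * ‖⟪b k, y⟫_𝕜‖ ^ 2 := by
        simp only [← b.sum_inner_mul_inner y (B y), hterm, map_sum, re_ofReal_mul,
          inner_mul_symm_re_eq_norm, norm_mul, norm_inner_symm y, sq]
    _ ≤ ∑ k, R * ‖⟪b k, y⟫_𝕜‖ ^ 2 := sum_le_sum fun k _ => by
        by_cases hk : R < μ k
        · simp [hy k hk]
        · exact mul_le_mul_of_nonneg_right (not_lt.1 hk) (sq_nonneg _)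
    _ = R * ‖y‖ ^ 2 := by rw [← mul_sum, b.sum_sq_norm_inner_right]

theorem ContinuousLinearMap.norm_apply_sq_le_of_norm_adjoint_apply_sq_le [CompleteSpace E]
    [CompleteSpace F] (T : E →L[𝕜] F) {R : ℝ} (hR : 0 ≤ R) (w : E)
    (h : ‖(T†) (T w)‖ ^ 2 ≤ R * ‖T w‖ ^ 2) : ‖T w‖ ^ 2 ≤ R * ‖w‖ ^ 2 := by
  have hTw : ‖T w‖ ^ 2 ≤ ‖(T†) (T w)‖ * ‖w‖ := by
    rw [← @inner_self_eq_norm_sq 𝕜, ← adjoint_inner_left]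
    exact (re_le_norm _).trans (norm_inner_le_norm _ _)
  -- `‖T w‖⁴ ≤ ‖T† (T w)‖² ‖w‖² ≤ R ‖T w‖² ‖w‖²`
  nlinarith [sq_nonneg (‖(T†) (T w)‖ * ‖w‖ - ‖T w‖ ^ 2), norm_nonneg ((T†) (T w)), norm_nonneg w,
    mul_nonneg hR (sq_nonneg ‖w‖), sq_nonneg ‖T w‖]

theorem ContinuousLinearMap.exists_finrank_lt_forall_mem_orthogonal_norm_sq_le [CompleteSpace E]
    [CompleteSpace F] [FiniteDimensional 𝕜 F] (T : E →L[𝕜] F) {n : ℕ} {R : ℝ} (hn : 0 < n)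
    (hR : 0 ≤ R) (hT : re (LinearMap.trace 𝕜 F (T ∘L T†)) ≤ n * R) :
    ∃ S : Submodule 𝕜 E, FiniteDimensional 𝕜 S ∧ Module.finrank 𝕜 S < n ∧
      ∀ w ∈ Sᗮ, ‖T w‖ ^ 2 ≤ R * ‖w‖ ^ 2 := by
  have hpos := (isPositive_self_comp_adjoint T).toLinearMap
  have hB := hpos.isSymmetric
  set b := hB.eigenvectorBasis rfl
  set μ := hB.eigenvalues rfl
  set K : Finset (Fin _) := {k | R < μ k}
  refine ⟨Submodule.span 𝕜 (Set.range fun k : K => (T†) (b k)),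
    FiniteDimensional.span_of_finite _ (Set.finite_range _), ?_, fun w hw => ?_⟩
  · calc Module.finrank 𝕜 (Submodule.span 𝕜 (Set.range fun k : K => (T†) (b k)))
        ≤ Fintype.card K := finrank_range_le_card _
      _ = #K := Fintype.card_coe K
      _ < n := card_filter_lt_lt_of_sum_le (hpos.nonneg_eigenvalues rfl) hn hR
        (by rwa [← hB.re_trace_eq_sum_eigenvalues])
  · apply T.norm_apply_sq_le_of_norm_adjoint_apply_sq_le hR
    have := hB.re_inner_apply_self_le rfl (T w) fun k hk => by
      rw [← adjoint_inner_left]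
      have hk : k ∈ K := mem_filter.2 ⟨mem_univ _, hk⟩
      exact Submodule.inner_right_of_mem_orthogonal
        (Submodule.subset_span (Set.mem_range_self (⟨k, hk⟩ : K))) hw
    rwa [ContinuousLinearMap.coe_coe, ContinuousLinearMap.comp_apply, ← adjoint_inner_left,
      inner_self_eq_norm_sq] at this

theorem ContinuousLinearMap.re_trace_comp_adjoint_eq_sum [CompleteSpace E] [CompleteSpace F]
    {ι : Type*} [Fintype ι] (T : E →L[𝕜] F) (b : OrthonormalBasis ι 𝕜 F) :
    re (LinearMap.trace 𝕜 F (T ∘L T†)) = ∑ i, ‖(T†) (b i)‖ ^ 2 := by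
  rw [LinearMap.trace_eq_sum_inner _ b, map_sum]
  refine sum_congr rfl fun i _ => ?_
  rw [ContinuousLinearMap.coe_coe, ContinuousLinearMap.comp_apply, ← adjoint_inner_left,
    inner_self_eq_norm_sq]

end Spectral

section Coordinates

variable {𝕜 E ι : Type*} [RCLike 𝕜] [NormedAddCommGroup E] [InnerProductSpace 𝕜 E]
  [CompleteSpace E] [Fintype ι]

theorem EuclideanSpace.norm_adjoint_single_le [DecidableEq ι] (T : E →L[𝕜] EuclideanSpace 𝕜 ι)
    (i : ι) (hT : ∀ u, ‖T u i‖ ≤ ‖u‖) : ‖(T†) (EuclideanSpace.single i 1)‖ ≤ 1 := by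
  set v := (T†) (EuclideanSpace.single i 1)
  have hv : ‖v‖ ^ 2 ≤ ‖v‖ := calc
    ‖v‖ ^ 2 = re (T v i) := by
      rw [← @inner_self_eq_norm_sq 𝕜, ContinuousLinearMap.adjoint_inner_left,
        EuclideanSpace.inner_single_left, map_one, one_mul]
    _ ≤ ‖T v i‖ := re_le_norm _
    _ ≤ ‖v‖ := hT v
  nlinarith [norm_nonneg v]

theorem LinearMap.exists_finrank_lt_forall_mem_orthogonal_sum_norm_sq_le (A : E →ₗ[𝕜] (ι → 𝕜))
    (hA : ∀ u i, ‖A u i‖ ≤ ‖u‖) {n : ℕ} (hn : 0 < n) :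
    ∃ S : Submodule 𝕜 E, FiniteDimensional 𝕜 S ∧ Module.finrank 𝕜 S < n ∧
      ∀ w ∈ Sᗮ, ∑ i, ‖A w i‖ ^ 2 ≤ (Fintype.card ι / n) * ‖w‖ ^ 2 := by
  classical
  let T : E →L[𝕜] EuclideanSpace 𝕜 ι := (EuclideanSpace.equiv ι 𝕜).symm.toContinuousLinearMap ∘L
    A.mkContinuous 1 fun u => by simpa using (pi_norm_le_iff_of_nonneg (norm_nonneg u)).2 (hA u)
  have hHS : re (LinearMap.trace 𝕜 (EuclideanSpace 𝕜 ι) (T ∘L T†)) ≤ n * (Fintype.card ι / n) := by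
    rw [T.re_trace_comp_adjoint_eq_sum (EuclideanSpace.basisFun ι 𝕜),
      mul_div_cancel₀ _ (by positivity)]
    calc ∑ i, ‖(T†) (EuclideanSpace.basisFun ι 𝕜 i)‖ ^ 2 ≤ ∑ _i : ι, 1 := sum_le_sum fun i _ => by
          rw [EuclideanSpace.basisFun_apply]
          exact pow_le_one₀ (norm_nonneg _) (EuclideanSpace.norm_adjoint_single_le T i (hA · i))
      _ = Fintype.card ι := by simp
  obtain ⟨S, hS, hSn, hSw⟩ :=
    T.exists_finrank_lt_forall_mem_orthogonal_norm_sq_le hn (by positivity) hHS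
  exact ⟨S, hS, hSn, fun w hw => by simpa [T, EuclideanSpace.norm_sq_eq] using hSw w hw⟩

end Coordinates

theorem lpNorm_eq_ofReal {p : ℝ} (hp : 0 ≤ p) {m : ℕ} (y : Fin m → ℂ) :
    lpNorm p y = ENNReal.ofReal ((∑ i, ‖y i‖ ^ p) ^ (1 / p)) := by
  rw [lpNorm, ← ENNReal.ofReal_rpow_of_nonneg (sum_nonneg fun i _ => by positivity) (by positivity),
    ENNReal.ofReal_sum_of_nonneg fun i _ => by positivity]
  congr 2 with i
  rw [← ENNReal.ofReal_rpow_of_nonneg (norm_nonneg _) hp, ofReal_norm]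
  rfl

theorem lpNormE_of_ne_top {p₀ : ℝ≥0∞} (hp₀ : p₀ ≠ ∞) {m : ℕ} (y : Fin m → ℂ) :
    lpNormE p₀ y = lpNorm p₀.toReal y :=
  if_neg hp₀

theorem ofReal_norm_le_lpNormE {p₀ : ℝ≥0∞} (hp₀ : p₀ ≠ 0) {m : ℕ} (y : Fin m → ℂ) (i : Fin m) :
    ENNReal.ofReal ‖y i‖ ≤ lpNormE p₀ y := by
  rcases eq_or_ne p₀ ∞ with rfl | ht
  · rw [lpNormE, if_pos rfl, ofReal_norm]
    exact le_iSup (fun j => (‖y j‖₊ : ℝ≥0∞)) i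
  have htpos : 0 < p₀.toReal := ENNReal.toReal_pos hp₀ ht
  rw [lpNormE_of_ne_top ht, lpNorm_eq_ofReal htpos.le]
  refine ENNReal.ofReal_le_ofReal ?_
  calc ‖y i‖ = (‖y i‖ ^ p₀.toReal) ^ (1 / p₀.toReal) := by
        rw [one_div, Real.rpow_rpow_inv (norm_nonneg _) htpos.ne']
    _ ≤ (∑ j, ‖y j‖ ^ p₀.toReal) ^ (1 / p₀.toReal) := by
        gcongr
        exact single_le_sum (f := fun j => ‖y j‖ ^ p₀.toReal) (fun j _ => by positivity)
          (mem_univ i)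

theorem sum_rpow_le_one_of_lpNorm_le_one {t : ℝ} (ht : 0 < t) {m : ℕ} {y : Fin m → ℂ}
    (hy : lpNorm t y ≤ 1) : ∑ i, ‖y i‖ ^ t ≤ 1 := by
  rw [lpNorm_eq_ofReal ht.le, ENNReal.ofReal_le_one, one_div] at hy
  rw [← Real.rpow_inv_rpow (sum_nonneg fun i _ => by positivity) ht.ne']
  exact Real.rpow_le_one (by positivity) hy ht.le

theorem lpNorm_le_rpow_of_sum_sq_le {p : ℝ} {p₀ : ℝ≥0∞} (hp : 2 ≤ p) (hpp₀ : ENNReal.ofReal p < p₀)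
    {m : ℕ} {y : Fin m → ℂ} {R : ℝ} (h2 : ∑ i, ‖y i‖ ^ 2 ≤ R) (hy : lpNormE p₀ y ≤ 1) :
    lpNorm p y ≤
      ENNReal.ofReal (R ^ ((1 / p - (p₀⁻¹).toReal) / (1 - 2 * (p₀⁻¹).toReal))) := by
  have hR : 0 ≤ R := (sum_nonneg fun i _ => by positivity).trans h2
  have h2' : ∑ i, ‖y i‖ ^ (2 : ℝ) ≤ R := by simpa only [Real.rpow_two] using h2
  set E := (1 / p - (p₀⁻¹).toReal) / (1 - 2 * (p₀⁻¹).toReal)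
  suffices hsum : ∑ i, ‖y i‖ ^ p ≤ R ^ (p * E) by
    rw [lpNorm_eq_ofReal (by linarith)]
    refine ENNReal.ofReal_le_ofReal ?_
    calc (∑ i, ‖y i‖ ^ p) ^ (1 / p) ≤ (R ^ (p * E)) ^ (1 / p) := by gcongr
      _ = R ^ E := by rw [← Real.rpow_mul hR]; field_simp
  rcases eq_or_ne p₀ ∞ with rfl | ht
  · have hy1 : ∀ i, ‖y i‖ ≤ 1 := fun i => ENNReal.ofReal_le_one.1
      ((ofReal_norm_le_lpNormE ENNReal.top_ne_zero y i).trans hy)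
    have hpE : p * E = 1 := by
      simp only [E, ENNReal.inv_top, ENNReal.toReal_zero, mul_zero, sub_zero]
      field_simp
    calc ∑ i, ‖y i‖ ^ p ≤ ∑ i, ‖y i‖ ^ (2 : ℝ) := sum_le_sum fun i _ =>
          Real.rpow_le_rpow_of_exponent_ge' (norm_nonneg _) (hy1 i) zero_le_two hp
      _ ≤ R ^ (p * E) := by rwa [hpE, Real.rpow_one]
  set t := p₀.toReal
  have hpt : p < t := (ENNReal.ofReal_lt_iff_lt_toReal (by linarith) ht).1 hpp₀
  have hpE : p * E = (t - p) / (t - 2) := by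
    simp only [E, show (p₀⁻¹).toReal = t⁻¹ from ENNReal.toReal_inv p₀]
    field_simp [show t ≠ 0 by linarith, show t - 2 ≠ 0 by linarith]
  have ht1 : ∑ i, ‖y i‖ ^ t ≤ 1 :=
    sum_rpow_le_one_of_lpNorm_le_one (by linarith) (lpNormE_of_ne_top ht y ▸ hy)
  calc ∑ i, ‖y i‖ ^ p
      ≤ (∑ i, ‖y i‖ ^ (2 : ℝ)) ^ ((t - p) / (t - 2)) * (∑ i, ‖y i‖ ^ t) ^ ((p - 2) / (t - 2)) :=
        sum_rpow_le_sum_rpow_pow_mul_sum_rpow_pow _ (fun i => norm_nonneg _) zero_le_two hp hpt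
    _ ≤ R ^ ((t - p) / (t - 2)) * 1 := by
        gcongr
        · exact div_nonneg (by linarith) (by linarith)
        · exact Real.rpow_le_one (sum_nonneg fun i _ => by positivity) ht1
            (div_nonneg (by linarith) (by linarith))
    _ = R ^ (p * E) := by rw [mul_one, hpE]

theorem genWeylNum_le_of_forall_exists {W : Type*} [AddCommGroup W] [Module ℂ W]
    {N₁ N₂ : W → ℝ≥0∞} {n : ℕ} {c : ℝ≥0∞}
    (h : ∀ A : ellTwo →ₗ[ℂ] W, (∀ u, N₁ (A u) ≤ ENNReal.ofReal ‖u‖) →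
      ∃ F : ellTwo →ₗ[ℂ] W, Module.rank ℂ (LinearMap.range F) < n ∧
        ∀ u : ellTwo, ‖u‖ ≤ 1 → N₂ (A u - F u) ≤ c) :
    genWeylNum W N₁ N₂ n ≤ c :=
  iSup_le fun A =>
    let ⟨F, hF, hAF⟩ := h A.1 A.2
    iInf_le_of_le ⟨F, hF⟩ (iSup_le fun u => hAF u.1 u.2)

theorem LinearMap.rank_range_comp_starProjection_lt {𝕜 E W : Type*} [RCLike 𝕜]
    [NormedAddCommGroup E] [InnerProductSpace 𝕜 E] [AddCommGroup W] [Module 𝕜 W]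
    (A : E →ₗ[𝕜] W) (S : Submodule 𝕜 E) [FiniteDimensional 𝕜 S] {n : ℕ}
    (hS : Module.finrank 𝕜 S < n) :
    Module.rank 𝕜 (range (A ∘ₗ S.starProjection.toLinearMap)) < n := by
  rw [range_comp, Submodule.range_starProjection, ← Module.finrank_eq_rank]
  exact_mod_cast (Submodule.finrank_map_le A S).trans_lt hS

/-- For `2 ≤ p < p₀ ≤ ∞` and `n ≤ m`, the Weyl numbers of `id : ℓ_{p₀}^m → ℓ_p^m`
satisfy `x_n(id) ≲ (m/n)^{1/r}` with `1/r = (1/p - 1/p₀)/(1 - 2/p₀)`, the implicit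
constant independent of `n` and `m`. -/
theorem weyl_lp_id_upper (p : ℝ) (p₀ : ℝ≥0∞)
    (hp : 2 ≤ p) (hpp₀ : ENNReal.ofReal p < p₀) :
    ∃ c : ℝ, 0 < c ∧ ∀ m n : ℕ, 1 ≤ n → n ≤ m →
      genWeylNum (Fin m → ℂ) (lpNormE p₀) (lpNorm p) n ≤
        ENNReal.ofReal (c * ((m : ℝ) / (n : ℝ)) ^
          ((1 / p - (p₀⁻¹).toReal) / (1 - 2 * (p₀⁻¹).toReal))) := by
  have hp₀ : p₀ ≠ 0 := ne_bot_of_gt hpp₀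
  refine ⟨1, one_pos, fun m n hn _ => genWeylNum_le_of_forall_exists fun A hA => ?_⟩
  have hcoord : ∀ u i, ‖A u i‖ ≤ ‖u‖ := fun u i => (ENNReal.ofReal_le_ofReal_iff (norm_nonneg u)).1
    ((ofReal_norm_le_lpNormE hp₀ _ i).trans (hA u))
  obtain ⟨S, _, hSn, hS⟩ := A.exists_finrank_lt_forall_mem_orthogonal_sum_norm_sq_le hcoord hn
  refine ⟨A ∘ₗ S.starProjection.toLinearMap, A.rank_range_comp_starProjection_lt S hSn,
    fun u hu => ?_⟩
  set w := Sᗮ.starProjection u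
  have hw : ‖w‖ ≤ 1 := (Sᗮ.norm_starProjection_apply_le u).trans hu
  have hAw : A u - (A ∘ₗ S.starProjection.toLinearMap) u = A w := by simp [w, map_sub]
  rw [hAw, one_mul]
  refine lpNorm_le_rpow_of_sum_sq_le hp hpp₀ ((hS w (Sᗮ.starProjection_apply_mem u)).trans ?_)
    ((hA w).trans (ENNReal.ofReal_le_one.2 hw))
  simpa using mul_le_of_le_one_right (by positivity : (0 : ℝ) ≤ m / n)
    (pow_le_one₀ (norm_nonneg w) hw)
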